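/- Let ψ : G → G be a commutator-central endomorphism of a group G and let β ∈ 𝓔. For g ∈ G let η_g : G → G be the map η_g(h) = g ∘_{ψ,β} h. Then the collection N = {η_g : g ∈ G} acts regularly on G: for all h, k ∈ G there exists a unique g ∈ G such that g ∘_{ψ,β} h = k. -/

import Mathlib

/-- Evaluation of an element of the free group `𝓔 = FreeGroup (Monoid.End G)`
at an element `g : G`: the image of `α` under the homomorphism `𝓔 → G`
given by `FreeGroup.lift (fun φ => φ g)`. -/
def evalE {G : Type*} [Group G] (α : FreeGroup (Monoid.End G)) (g : G) : G :=
  FreeGroup.lift (fun φ : Monoid.End G => φ g) α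

/-- The binary operation `g ∘_{ψ,α} h = g · ψ_α(g) · h · ψ_α(g)⁻¹`, where
`ψ_α(g) = ψ (α(g))`. -/
def op {G : Type*} [Group G] (ψ : Monoid.End G) (α : FreeGroup (Monoid.End G)) (g h : G) : G :=
  g * ψ (evalE α g) * h * (ψ (evalE α g))⁻¹

open scoped commutatorElement

/-! The conjugation `h ↦ ψ_β(g) h ψ_β(g)⁻¹` only depends on `ψ_β(g)` modulo the centre, and
modulo the centre `g ↦ ψ_β(g)` is a homomorphism with abelian image, since `β(g)` is
multiplicative in `g` up to commutators and `ψ` sends commutators to the centre. So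
`g ∘ h = g · σ(g)(h)` for a homomorphism `σ : G → Aut G` with `σ ∘ σ(a) = σ`. Applying `σ` to
`g · σ(g)(h) = k` gives `σ(g) = σ(k) σ(h)⁻¹`, which determines `g = k · (σ(g)(h))⁻¹`;
conversely this `g` is a solution. -/

theorem existsUnique_mul_apply_eq {G : Type*} [Group G] (σ : G →* MulAut G)
    (hσ : ∀ a x, σ (σ a x) = σ x) (h k : G) :
    ∃! g : G, g * σ g h = k := by
  refine ⟨k * (σ (k * h⁻¹) h)⁻¹, ?_, fun g hg => ?_⟩
  · have hσ_sol : σ (k * (σ (k * h⁻¹) h)⁻¹) = σ (k * h⁻¹) := by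
      rw [map_mul, map_inv, hσ, map_mul, map_inv]
    dsimp only
    rw [hσ_sol, inv_mul_cancel_right]
  · have hσg : σ g = σ (k * h⁻¹) := by
      have hσk := congrArg σ hg
      rw [map_mul, hσ] at hσk
      rw [map_mul, map_inv, ← hσk, mul_inv_cancel_right]
    rw [← hσg, ← hg, mul_inv_cancel_right]

section

variable {G : Type*} [Group G]

theorem of_evalE_mul (β : FreeGroup (Monoid.End G)) (a b : G) :
    Abelianization.of (evalE β (a * b)) =
      Abelianization.of (evalE β a) * Abelianization.of (evalE β b) := by
  have hom_eq : Abelianization.of.comp (FreeGroup.lift fun φ : Monoid.End G => φ (a * b)) =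
      Abelianization.of.comp (FreeGroup.lift fun φ : Monoid.End G => φ a) *
        Abelianization.of.comp (FreeGroup.lift fun φ : Monoid.End G => φ b) :=
    FreeGroup.ext_hom _ _ fun φ => by simp
  exact DFunLike.congr_fun hom_eq β

theorem evalE_one (β : FreeGroup (Monoid.End G)) : evalE β (1 : G) = 1 := by
  have hom_eq : (FreeGroup.lift fun φ : Monoid.End G => φ (1 : G)) = 1 :=
    FreeGroup.ext_hom _ _ fun φ => by simp
  exact DFunLike.congr_fun hom_eq β

def evalAb (β : FreeGroup (Monoid.End G)) : G →* Abelianization G where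
  toFun a := Abelianization.of (evalE β a)
  map_one' := by rw [evalE_one, map_one]
  map_mul' := of_evalE_mul β

theorem MulAut.conj_eq_one_of_mem_center {t : G} (ht : t ∈ Subgroup.center G) :
    MulAut.conj t = 1 :=
  MulEquiv.ext fun x => by
    rw [MulAut.conj_apply, (Subgroup.mem_center_iff.mp ht x).symm, mul_inv_cancel_right]
    rfl

theorem commutator_le_ker_conj_comp {ψ : Monoid.End G}
    (hψ : ∀ g h : G, ψ ⁅g, h⁆ ∈ Subgroup.center G) :
    commutator G ≤ (MulAut.conj.comp ψ).ker := by
  rw [commutator_def, Subgroup.commutator_le]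
  intro g _ h _
  exact MulAut.conj_eq_one_of_mem_center (hψ g h)

def conjPsiAb {ψ : Monoid.End G} (hψ : ∀ g h : G, ψ ⁅g, h⁆ ∈ Subgroup.center G) :
    Abelianization G →* MulAut G :=
  QuotientGroup.lift (commutator G) (MulAut.conj.comp ψ) (commutator_le_ker_conj_comp hψ)

def conjPsi {ψ : Monoid.End G} (hψ : ∀ g h : G, ψ ⁅g, h⁆ ∈ Subgroup.center G)
    (β : FreeGroup (Monoid.End G)) : G →* MulAut G :=
  (conjPsiAb hψ).comp (evalAb β)

variable {ψ : Monoid.End G} (hψ : ∀ g h : G, ψ ⁅g, h⁆ ∈ Subgroup.center G)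
  (β : FreeGroup (Monoid.End G))

theorem conjPsi_apply (g : G) : conjPsi hψ β g = MulAut.conj (ψ (evalE β g)) := rfl

theorem op_eq_mul_conjPsi (g h : G) : op ψ β g h = g * conjPsi hψ β g h := by
  rw [conjPsi_apply, MulAut.conj_apply, op, mul_assoc, mul_assoc, mul_assoc]

theorem commute_conjPsi (a b : G) : Commute (conjPsi hψ β a) (conjPsi hψ β b) :=
  (Commute.all (evalAb β a) (evalAb β b)).map (conjPsiAb hψ)

theorem conjPsi_conjPsi (a x : G) : conjPsi hψ β (conjPsi hψ β a x) = conjPsi hψ β x := by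
  rw [conjPsi_apply hψ β a, MulAut.conj_apply, map_mul, map_mul,
    (commute_conjPsi hψ β _ x).eq, map_inv, mul_inv_cancel_right]

end

/-- the family `N = {η_g}`, `η_g(h) = g ∘_{ψ,β} h`, acts regularly on
`G`: for all `h k` there is a unique `g` with `g ∘_{ψ,β} h = k`. -/
theorem op_regular {G : Type*} [Group G]
    (ψ : Monoid.End G) (hψ : ∀ g h : G, ψ ⁅g, h⁆ ∈ Subgroup.center G)
    (β : FreeGroup (Monoid.End G)) (h k : G) :
    ∃! g : G, op ψ β g h = k := by
  simpa only [op_eq_mul_conjPsi hψ β] using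
    existsUnique_mul_apply_eq (conjPsi hψ β) (conjPsi_conjPsi hψ β) h k
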